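/- If player Two has a winning strategy in the Rothberger game on a topological space X, then the G_δ-topology on X is Lindelöf. -/

import Mathlib

open Set

/-- The history of the first `n+1` moves of player One (a play `f`). -/
def oneHist {M : Type*} (f : ℕ → M) (n : ℕ) : List M :=
  List.ofFn (fun i : Fin (n + 1) => f i.val)

/-- Player Two has a winning strategy in the Rothberger game on `X`:
there is a strategy `σ` assigning to every finite history of open covers played by One
a single set, such that for every run of the game in which One plays open covers,
Two's moves are legal (members of the corresponding covers) and they cover `X`. -/
def RothbergerTwoWins (X : Type*) [TopologicalSpace X] : Prop :=
  ∃ σ : List (Set (Set X)) → Set X,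
    ∀ f : ℕ → Set (Set X),
      (∀ n, (∀ U ∈ f n, IsOpen U) ∧ ⋃₀ f n = univ) →
      (∀ n, σ (oneHist f n) ∈ f n) ∧ (⋃ n, σ (oneHist f n)) = univ

lemma oneHist_eq {M : Type*} (f : ℕ → M) (L : List M) (n : ℕ) (hn : n + 1 = L.length)
    (hf : ∀ i (h : i < L.length), f i = L[i]) : oneHist f n = L := by
  apply List.ext_getElem
  · simpa [oneHist] using hn
  · intro i h1 h2
    simp only [oneHist, List.getElem_ofFn]
    exact hf i h2

lemma oneHist_zero {M : Type*} (f : ℕ → M) : oneHist f 0 = [f 0] := by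
  simp [oneHist]

lemma oneHist_succ {M : Type*} (f : ℕ → M) (n : ℕ) :
    oneHist f (n + 1) = oneHist f n ++ [f (n + 1)] := by
  rw [oneHist, List.ofFn_succ']
  simp [oneHist, Fin.last]

/-- If player Two has a winning strategy in the Rothberger game on a topological space `X`,
then the Gδ-topology on `X` (the topology generated by the Gδ subsets of `X`)
is Lindelöf. -/
theorem rothberger_two_wins_implies_gdelta_lindelof (X : Type*) [t : TopologicalSpace X]
    (h : RothbergerTwoWins X) :
    @LindelofSpace X (TopologicalSpace.generateFrom {s : Set X | IsGδ s}) := by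
  classical
  obtain ⟨σ, hσ⟩ := h
  set OC : Set (Set X) → Prop := fun 𝒰 => (∀ U ∈ 𝒰, IsOpen U) ∧ ⋃₀ 𝒰 = univ with hOCdef
  have hOCuniv : OC {univ} := by
    constructor
    · intro U hU
      rw [mem_singleton_iff] at hU
      rw [hU]; exact isOpen_univ
    · exact sUnion_singleton univ
  -- legality of σ on arbitrary finite histories of open covers
  have hmem : ∀ L : List (Set (Set X)), (∀ 𝒰 ∈ L, OC 𝒰) → ∀ 𝒰, OC 𝒰 → σ (L ++ [𝒰]) ∈ 𝒰 := by
    intro L hL 𝒰 h𝒰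
    set M : List (Set (Set X)) := L ++ [𝒰] with hM
    have hMlen : M.length = L.length + 1 := by simp [hM]
    set f : ℕ → Set (Set X) := fun k => if hk : k < M.length then M[k] else {univ} with hfdef
    have hfin : ∀ k (hk : k < M.length), f k = M[k] := by
      intro k hk; simp [hfdef, hk]
    have hf : ∀ k, OC (f k) := by
      intro k
      by_cases hk : k < M.length
      · rw [hfin k hk]
        have hmemM : M[k] ∈ M := List.getElem_mem hk
        have hmm : M[k] ∈ L ++ [𝒰] := hmemM
        rcases List.mem_append.1 hmm with h1 | h1
        · exact hL _ h1
        · rw [List.mem_singleton] at h1; rw [h1]; exact h𝒰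
      · rw [hfdef]; simp only [hk, dif_neg, not_false_iff]
        exact hOCuniv
    have key := (hσ f hf).1 L.length
    have hhist : oneHist f L.length = M := oneHist_eq f M L.length hMlen.symm hfin
    rw [hhist] at key
    have hlast : f L.length = 𝒰 := by
      have hk : L.length < M.length := by omega
      rw [hfin L.length hk]
      simp [hM]
    rwa [hlast] at key
  -- the degenerate empty case
  rcases isEmpty_or_nonempty X with hX | hX
  · refine @LindelofSpace.mk X (TopologicalSpace.generateFrom {s : Set X | IsGδ s}) ?_
    have huniv : (univ : Set X) = ∅ := univ_eq_empty_iff.mpr hX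
    rw [huniv]
    exact @isLindelof_empty X (TopologicalSpace.generateFrom {s : Set X | IsGδ s})
  -- Galvin's key lemma: critical points
  have KL : ∀ L : List (Set (Set X)), ∃ x : X,
      (∀ 𝒰 ∈ L, OC 𝒰) → ∀ V : Set X, IsOpen V → x ∈ V →
        ∃ 𝒰, OC 𝒰 ∧ σ (L ++ [𝒰]) ⊆ V := by
    intro L
    by_cases hL : ∀ 𝒰 ∈ L, OC 𝒰
    · by_contra hc
      have hc' : ∀ x : X, ∃ V : Set X, IsOpen V ∧ x ∈ V ∧
          ∀ 𝒰, OC 𝒰 → ¬ σ (L ++ [𝒰]) ⊆ V := by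
        intro x
        by_contra hx
        apply hc
        refine ⟨x, fun _ V hV hxV => ?_⟩
        by_contra h2
        exact hx ⟨V, hV, hxV, fun 𝒰 h𝒰 hsub => h2 ⟨𝒰, h𝒰, hsub⟩⟩
      choose V hVo hVx hVn using hc'
      have hcov : OC (Set.range V) := by
        constructor
        · rintro U ⟨x, rfl⟩; exact hVo x
        · apply eq_univ_of_forall
          intro x
          exact mem_sUnion.mpr ⟨V x, ⟨x, rfl⟩, hVx x⟩
      obtain ⟨x₀, hx₀⟩ := hmem L hL (Set.range V) hcov
      exact hVn x₀ (Set.range V) hcov (Eq.superset hx₀)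
    · exact ⟨Classical.arbitrary X, fun hc => absurd hc hL⟩
  -- now prove Lindelöf
  refine @LindelofSpace.mk X (TopologicalSpace.generateFrom {s : Set X | IsGδ s})
    (@isLindelof_of_countable_subcover X (TopologicalSpace.generateFrom
      {s : Set X | IsGδ s}) univ ?_)
  intro ι U hUo hUcov
  have hB : @TopologicalSpace.IsTopologicalBasis X
      (TopologicalSpace.generateFrom {s : Set X | IsGδ s}) {s : Set X | IsGδ s} := by
    refine @TopologicalSpace.IsTopologicalBasis.mk X
      (TopologicalSpace.generateFrom {s : Set X | IsGδ s}) _ ?_ ?_ rfl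
    · intro t₁ h₁ t₂ h₂ x hx
      exact ⟨t₁ ∩ t₂, IsGδ.inter h₁ h₂, hx, Subset.rfl⟩
    · apply eq_univ_of_forall
      intro x
      exact mem_sUnion.mpr ⟨univ, IsGδ.univ, mem_univ x⟩
  have hxb : ∀ x : X, ∃ bx : Set X, IsGδ bx ∧ x ∈ bx ∧ ∃ i, bx ⊆ U i := by
    intro x
    obtain ⟨i, hi⟩ := mem_iUnion.1 (hUcov (mem_univ x))
    obtain ⟨v, hv, hxv, hvu⟩ := @TopologicalSpace.IsTopologicalBasis.exists_subset_of_mem_open X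
      (TopologicalSpace.generateFrom {s : Set X | IsGδ s}) _ hB x (U i) hi (hUo i)
    exact ⟨v, hv, hxv, i, hvu⟩
  choose b hbG hbx hib using hxb
  choose ib hbsub using hib
  choose W hWo hWeq using fun x : X => (hbG x).eq_iInter_nat
  -- critical points and next covers
  set xpt : List (Set (Set X)) → X := fun L => (KL L).choose with hxptdef
  have xspec : ∀ L, (∀ 𝒰 ∈ L, OC 𝒰) → ∀ V, IsOpen V → xpt L ∈ V →
      ∃ 𝒰, OC 𝒰 ∧ σ (L ++ [𝒰]) ⊆ V := fun L => (KL L).choose_spec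
  have nxtEx : ∀ (L : List (Set (Set X))) (m : ℕ), ∃ 𝒰,
      (∀ 𝒱 ∈ L, OC 𝒱) → (OC 𝒰 ∧ σ (L ++ [𝒰]) ⊆ W (xpt L) m) := by
    intro L m
    by_cases hL : ∀ 𝒱 ∈ L, OC 𝒱
    · have hx : xpt L ∈ W (xpt L) m := by
        have hmem' : xpt L ∈ b (xpt L) := hbx _
        rw [hWeq (xpt L)] at hmem'
        exact mem_iInter.1 hmem' m
      obtain ⟨𝒰, h1, h2⟩ := xspec L hL _ (hWo _ m) hx
      exact ⟨𝒰, fun _ => ⟨h1, h2⟩⟩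
    · exact ⟨{univ}, fun hc => absurd hc hL⟩
  choose nxt hnxt using nxtEx
  -- the tree of histories
  set H : List ℕ → List (Set (Set X)) :=
    fun r => r.foldr (fun m ih => ih ++ [nxt ih m]) [] with hHdef
  have hHnil : H [] = [] := rfl
  have hHcons : ∀ (m : ℕ) (r : List ℕ), H (m :: r) = H r ++ [nxt (H r) m] := fun m r => rfl
  have hHcov : ∀ r : List ℕ, ∀ 𝒱 ∈ H r, OC 𝒱 := by
    intro r
    induction r with
    | nil => intro 𝒱 h𝒱; rw [hHnil] at h𝒱; exact absurd h𝒱 List.not_mem_nil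
    | cons m r ih =>
      intro 𝒱 h𝒱
      rw [hHcons m r, List.mem_append] at h𝒱
      rcases h𝒱 with h1 | h1
      · exact ih 𝒱 h1
      · rw [List.mem_singleton] at h1
        rw [h1]
        exact (hnxt (H r) m ih).1
  -- main covering claim
  have main : (univ : Set X) ⊆ ⋃ r : List ℕ, b (xpt (H r)) := by
    intro y _
    by_contra hy
    simp only [mem_iUnion, not_exists] at hy
    have hdep : ∀ r : List ℕ, ∃ m, y ∉ W (xpt (H r)) m := by
      intro r
      by_contra hm
      push_neg at hm
      exact hy r (by rw [hWeq]; exact mem_iInter.2 hm)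
    choose dep hdep using hdep
    set bb : ℕ → List ℕ := fun n => Nat.rec [] (fun _ r => dep r :: r) n with hbbdef
    have hbb : ∀ n, bb (n + 1) = dep (bb n) :: bb n := fun n => rfl
    set F : ℕ → Set (Set X) := fun n => nxt (H (bb n)) (dep (bb n)) with hFdef
    have hHb : ∀ n, H (bb (n + 1)) = H (bb n) ++ [F n] := by
      intro n
      rw [hbb n, hHcons]
    have hFcov : ∀ n, OC (F n) := fun n => (hnxt _ _ (hHcov (bb n))).1
    have hhist : ∀ n, oneHist F n = H (bb (n + 1)) := by
      intro n
      induction n with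
      | zero =>
        rw [oneHist_zero, hHb 0, hbbdef]
        simp [hHnil]
      | succ n ih =>
        rw [oneHist_succ, ih, hHb (n + 1)]
    have hwin := (hσ F hFcov).2
    have hyU : y ∈ ⋃ n, σ (oneHist F n) := hwin ▸ mem_univ y
    obtain ⟨n, hn⟩ := mem_iUnion.1 hyU
    rw [hhist n, hHb n, hFdef] at hn
    exact hdep (bb n) ((hnxt (H (bb n)) (dep (bb n)) (hHcov (bb n))).2 hn)
  -- conclude with a countable subcover
  refine ⟨Set.range (fun r : List ℕ => ib (xpt (H r))), countable_range _, ?_⟩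
  intro y hy
  obtain ⟨r, hr⟩ := mem_iUnion.1 (main hy)
  exact mem_biUnion ⟨r, rfl⟩ (hbsub (xpt (H r)) hr)
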